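/- The (2,3,7) triangle group T(2,3,7) = ⟨x, y, z ∣ x² = y³ = z⁷ = xyz = 1⟩ does not split as a free product of two nontrivial groups: if A and B are groups and T(2,3,7) is isomorphic to the free product A ∗ B, then A is trivial or B is trivial. -/

import Mathlib

open Monoid in
/-- The relators of the (2,3,7) triangle group
`T(2,3,7) = ⟨x, y, z ∣ x² = y³ = z⁷ = xyz = 1⟩`. -/
def T237Rels : Set (FreeGroup (Fin 3)) :=
  {FreeGroup.of 0 ^ 2, FreeGroup.of 1 ^ 3, FreeGroup.of 2 ^ 7,
    FreeGroup.of 0 * FreeGroup.of 1 * FreeGroup.of 2}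

/-- The (2,3,7) triangle group as a presented group. -/
abbrev T237 : Type := PresentedGroup T237Rels

/-!
An element of finite order in a free product is conjugate into one of the factors: if its
reduced word begins and ends in different factors, its powers are reduced words of growing
length, and otherwise conjugating by the last letter shortens the word. So in `A ∗ B` each of
the generators `x, y, z` of `T(2,3,7)` lies in the kernel of `A ∗ B → B` or of `A ∗ B → A`,
and two of them lie in the same kernel. Since `xyz = 1`, any two of `x, y, z` generate the
group, so that surjective projection kills everything and its target factor is trivial.
-/

namespace List

theorem eq_singleton_or_eq_cons_append_singleton {α : Type*} {l : List α} {a b : α}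
    (ha : l.head? = some a) (hb : l.getLast? = some b) :
    l = [a] ∨ ∃ m, l = a :: (m ++ [b]) := by
  obtain ⟨t, rfl⟩ : ∃ t, l = a :: t := by
    cases l with
    | nil => simp at ha
    | cons c t => exact ⟨t, by simp_all⟩
  rcases eq_nil_or_concat' t with rfl | ⟨m, c, rfl⟩
  · exact .inl rfl
  · rw [← cons_append, getLast?_concat, Option.some_inj] at hb
    exact .inr ⟨m, by rw [hb]⟩

end List

namespace Monoid.CoprodI

variable {ι : Type*} {G : ι → Type*} [∀ i, Group (G i)]

theorem NeWord.prod_ne_one {i j : ι} (w : NeWord G i j) : w.prod ≠ 1 := by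
  classical
  intro h
  have : w.toWord = Word.empty := Word.equiv.symm.injective h
  exact w.toList_ne_nil (congrArg Word.toList this)

theorem NeWord.exists_prod_eq_pow {i j : ι} (hij : i ≠ j) (w : NeWord G i j) (n : ℕ) :
    ∃ v : NeWord G i j, v.prod = w.prod ^ (n + 1) := by
  induction n with
  | zero => exact ⟨w, (pow_one _).symm⟩
  | succ n ih =>
    obtain ⟨v, hv⟩ := ih
    exact ⟨v.append hij.symm w, by rw [NeWord.append_prod, hv, ← pow_succ]⟩

theorem NeWord.not_isOfFinOrder_prod {i j : ι} (hij : i ≠ j) (w : NeWord G i j) :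
    ¬IsOfFinOrder w.prod := by
  intro hw
  obtain ⟨n, hn, hpow⟩ := hw.exists_pow_eq_one
  obtain ⟨v, hv⟩ := w.exists_prod_eq_pow hij (n - 1)
  exact v.prod_ne_one (by rwa [hv, Nat.sub_add_cancel hn])

/-- Conjugating by the last letter merges it into the first one. -/
theorem Word.exists_isConj_prod_length_lt {w : Word G} {i : ι} {a b : G i}
    {m : List (Σ i, G i)} (hw : w.toList = ⟨i, a⟩ :: (m ++ [⟨i, b⟩])) :
    ∃ w' : Word G, IsConj w.prod w'.prod ∧ w'.toList.length < w.toList.length := by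
  have hchain := w.chain_ne
  rw [hw, List.isChain_cons] at hchain
  let u : Word G :=
    { toList := m
      ne_one := fun l hl => w.ne_one l (by simp [hw, hl])
      chain_ne := hchain.2.left_of_append }
  have hu : u.fstIdx ≠ some i :=
    Word.fstIdx_ne_iff.mpr fun l hl => hchain.1 l (List.mem_head?_append_of_mem_head? hl)
  have hprod : w.prod = of a * u.prod * of b := by simp [Word.prod, hw, u, mul_assoc]
  have hconj : IsConj w.prod (of (b * a) * u.prod) :=
    isConj_iff.mpr ⟨of b, by rw [hprod, map_mul]; group⟩
  by_cases hba : b * a = 1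
  · exact ⟨u, by simpa [hba] using hconj, by simp [hw, u]⟩
  · exact ⟨Word.cons (b * a) u hu hba, by simpa using hconj, by simp [hw, u]⟩

theorem Word.exists_isConj_of_isOfFinOrder_prod [Nonempty ι] (w : Word G)
    (hw : IsOfFinOrder w.prod) : ∃ i, ∃ x : G i, IsConj (of x) w.prod := by
  classical
  induction hlen : w.toList.length using Nat.strong_induction_on generalizing w with
  | _ n ih =>
  by_cases hempty : w = Word.empty
  · exact ⟨Classical.arbitrary ι, 1, by simp [hempty]⟩
  obtain ⟨i, j, w, rfl⟩ := NeWord.of_word w hempty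
  obtain rfl | hij := eq_or_ne i j
  · rcases List.eq_singleton_or_eq_cons_append_singleton w.toList_head? w.toList_getLast?
      with hs | ⟨m, hm⟩
    · have hprod : w.toWord.prod = of w.head := by simp [Word.prod, NeWord.toWord, hs]
      exact ⟨i, w.head, hprod ▸ IsConj.refl _⟩
    · obtain ⟨w', hconj, hlt⟩ := exists_isConj_prod_length_lt (w := w.toWord) hm
      obtain ⟨k, x, hx⟩ := ih _ (hlen ▸ hlt) w' (hconj.isOfFinOrder hw) rfl
      exact ⟨k, x, hx.trans hconj.symm⟩
  · exact absurd hw (w.not_isOfFinOrder_prod hij)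

theorem exists_isConj_of_isOfFinOrder [Nonempty ι] {g : CoprodI G} (hg : IsOfFinOrder g) :
    ∃ i, ∃ x : G i, IsConj (of x) g := by
  classical
  have hprod : (Word.equiv g).prod = g := Word.equiv.symm_apply_apply g
  rw [← hprod] at hg ⊢
  exact Word.exists_isConj_of_isOfFinOrder_prod _ hg

end Monoid.CoprodI

theorem Subgroup.closure_pair_eq_top_of_mul_mul_eq_one {G : Type*} [Group G] {x y z : G}
    (hgen : closure {x, y, z} = ⊤) (hxyz : x * y * z = 1) : closure {x, y} = ⊤ := by
  rw [eq_top_iff, ← hgen, closure_le]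
  have hz : z = (x * y)⁻¹ := eq_inv_of_mul_eq_one_right hxyz
  rintro g (rfl | rfl | rfl)
  · exact subset_closure (by simp)
  · exact subset_closure (by simp)
  · exact hz ▸ inv_mem (mul_mem (subset_closure (by simp)) (subset_closure (by simp)))

theorem MonoidHom.eq_one_of_surjective_of_closure_pair_eq_top {G H : Type*} [Group G] [Group H]
    {f : G →* H} (hf : Function.Surjective f) ⦃g₁ g₂ : G⦄
    (hgen : Subgroup.closure {g₁, g₂} = ⊤) (h₁ : f g₁ = 1) (h₂ : f g₂ = 1) (x : H) :
    x = 1 := by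
  have hker : f.ker = ⊤ := by
    rw [eq_top_iff, ← hgen, Subgroup.closure_le]
    rintro g (rfl | rfl)
    exacts [h₁, h₂]
  obtain ⟨g, rfl⟩ := hf x
  exact f.mem_ker.mp (hker ▸ Subgroup.mem_top g)

namespace Monoid.Coprod

universe u v

variable {A : Type u} {B : Type v} [Group A] [Group B]

variable (A B) in
/-- The factors of `A ∗ B`, lifted to a common universe so that they form a family over `Bool`. -/
abbrev BoolFamily : Bool → Type (max u v) := fun b => cond b (ULift.{v} A) (ULift.{u} B)

instance : ∀ b, Group (BoolFamily A B b)
  | true => inferInstanceAs (Group (ULift A))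
  | false => inferInstanceAs (Group (ULift B))

def toCoprodI : A ∗ B →* CoprodI (BoolFamily A B) :=
  lift ((CoprodI.of (i := true)).comp MulEquiv.ulift.symm.toMonoidHom)
    ((CoprodI.of (i := false)).comp MulEquiv.ulift.symm.toMonoidHom)

def ofCoprodI : CoprodI (BoolFamily A B) →* A ∗ B :=
  CoprodI.lift fun
    | true => inl.comp MulEquiv.ulift.toMonoidHom
    | false => inr.comp MulEquiv.ulift.toMonoidHom

theorem ofCoprodI_toCoprodI (g : A ∗ B) : ofCoprodI (toCoprodI g) = g :=
  DFunLike.congr_fun (hom_ext rfl rfl : ofCoprodI.comp toCoprodI = .id _) g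

theorem exists_isConj_of_isOfFinOrder {g : A ∗ B} (hg : IsOfFinOrder g) :
    (∃ a, IsConj (inl a) g) ∨ ∃ b, IsConj (inr b) g := by
  obtain ⟨i, x, hx⟩ := CoprodI.exists_isConj_of_isOfFinOrder (toCoprodI.isOfFinOrder hg)
  have hconj := ofCoprodI.map_isConj hx
  rw [ofCoprodI_toCoprodI] at hconj
  cases i
  · exact .inr ⟨x.down, hconj⟩
  · exact .inl ⟨x.down, hconj⟩

theorem snd_eq_one_or_fst_eq_one_of_isOfFinOrder {g : A ∗ B} (hg : IsOfFinOrder g) :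
    snd g = 1 ∨ fst g = 1 := by
  rcases exists_isConj_of_isOfFinOrder hg with ⟨a, ha⟩ | ⟨b, hb⟩
  · exact .inl (by simpa using (snd.map_isConj ha).symm)
  · exact .inr (by simpa using (fst.map_isConj hb).symm)

theorem eq_one_or_eq_one_of_mul_mul_eq_one {x y z : A ∗ B}
    (hgen : Subgroup.closure {x, y, z} = ⊤) (hxyz : x * y * z = 1)
    (hx : IsOfFinOrder x) (hy : IsOfFinOrder y) (hz : IsOfFinOrder z) :
    (∀ a : A, a = 1) ∨ (∀ b : B, b = 1) := by
  have rotate : ∀ {x y z : A ∗ B}, Subgroup.closure {x, y, z} = ⊤ → x * y * z = 1 →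
      Subgroup.closure {y, z, x} = ⊤ ∧ y * z * x = 1 := fun hgen hxyz =>
    ⟨by rwa [Set.pair_comm, Set.insert_comm], by rwa [mul_assoc, mul_eq_one_comm] at hxyz⟩
  obtain ⟨hgen', hyzx⟩ := rotate hgen hxyz
  obtain ⟨hgen'', hzxy⟩ := rotate hgen' hyzx
  have hxy := Subgroup.closure_pair_eq_top_of_mul_mul_eq_one hgen hxyz
  have hyz := Subgroup.closure_pair_eq_top_of_mul_mul_eq_one hgen' hyzx
  have hzx := Subgroup.closure_pair_eq_top_of_mul_mul_eq_one hgen'' hzxy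
  have hB := (snd : A ∗ B →* B).eq_one_of_surjective_of_closure_pair_eq_top snd_surjective
  have hA := (fst : A ∗ B →* A).eq_one_of_surjective_of_closure_pair_eq_top fst_surjective
  rcases snd_eq_one_or_fst_eq_one_of_isOfFinOrder hx with hx | hx <;>
    rcases snd_eq_one_or_fst_eq_one_of_isOfFinOrder hy with hy | hy
  · exact .inr (hB hxy hx hy)
  · rcases snd_eq_one_or_fst_eq_one_of_isOfFinOrder hz with hz | hz
    · exact .inr (hB hzx hz hx)
    · exact .inl (hA hyz hy hz)
  · rcases snd_eq_one_or_fst_eq_one_of_isOfFinOrder hz with hz | hz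
    · exact .inr (hB hyz hy hz)
    · exact .inl (hA hzx hz hx)
  · exact .inl (hA hxy hx hy)

end Monoid.Coprod

namespace T237

open PresentedGroup

theorem closure_of : Subgroup.closure {(of 0 : T237), of 1, of 2} = ⊤ := by
  rw [← closure_range_of]
  congr
  ext g
  simp [Fin.exists_fin_succ, eq_comm]

theorem of_mul_of_mul_of : (of 0 * of 1 * of 2 : T237) = 1 :=
  one_of_mem (by simp [T237Rels])

theorem isOfFinOrder_of (i : Fin 3) : IsOfFinOrder (of i : T237) := by
  refine isOfFinOrder_iff_pow_eq_one.mpr ?_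
  fin_cases i
  · exact ⟨2, two_pos, one_of_mem (by simp [T237Rels])⟩
  · exact ⟨3, three_pos, one_of_mem (by simp [T237Rels])⟩
  · exact ⟨7, by norm_num, one_of_mem (by simp [T237Rels])⟩

end T237

open Monoid in
/-- The triangle group `T(2,3,7)` does not split as a free product of two
nontrivial groups: if `T(2,3,7) ≃* A ∗ B` then `A` or `B` is trivial. -/
theorem T237_not_free_product (A B : Type*) [Group A] [Group B]
    (e : T237 ≃* Coprod A B) :
    (∀ a : A, a = 1) ∨ (∀ b : B, b = 1) := by
  open PresentedGroup in
  refine Coprod.eq_one_or_eq_one_of_mul_mul_eq_one (x := e (of 0)) (y := e (of 1)) (z := e (of 2))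
    ?_ (by rw [← map_mul, ← map_mul, T237.of_mul_of_mul_of, map_one])
    (e.toMonoidHom.isOfFinOrder (T237.isOfFinOrder_of 0))
    (e.toMonoidHom.isOfFinOrder (T237.isOfFinOrder_of 1))
    (e.toMonoidHom.isOfFinOrder (T237.isOfFinOrder_of 2))
  have himage : ({e (of 0), e (of 1), e (of 2)} : Set (Coprod A B)) =
      e.toMonoidHom '' {of 0, of 1, of 2} := by
    simp [Set.image_insert_eq]
  rw [himage, ← MonoidHom.map_closure, T237.closure_of]
  exact Subgroup.map_top_of_surjective _ e.surjective
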